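/- Let A be a commutative C*-algebra. Then every topologically essential closed submodule N of a Hilbert A-module M is essential: for every nonzero m ∈ M there exists a ∈ A with ma ∈ N and ma ≠ 0. -/
import Mathlib


open Filter Topology

/-- A (right) Hilbert C*-module structure on a complex normed space `M` over the
C*-algebra `A`: a right `A`-action `smul`, an `A`-valued inner product `inner`
(linear in the second variable), together with the compatibility and norm axioms,
and the rank-one ("theta") operators `Θ_{x,y} : z ↦ x⟨y,z⟩`, bundled as bounded
operators on `M`. -/
structure HilbertCStarModule (A : Type*) (M : Type*) [NonUnitalCStarAlgebra A]
    [PartialOrder A] [StarOrderedRing A]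
    [NormedAddCommGroup M] [NormedSpace ℂ M] where
  /-- the right action of `A` on `M` -/
  smul : M → A → M
  /-- the `A`-valued inner product -/
  inner : M → M → A
  add_smul : ∀ x y a, smul (x + y) a = smul x a + smul y a
  smul_add : ∀ x a b, smul x (a + b) = smul x a + smul x b
  smul_smul : ∀ x a b, smul (smul x a) b = smul x (a * b)
  smul_zero : ∀ x, smul x 0 = 0
  zero_smul : ∀ a, smul 0 a = 0
  csmul_smul : ∀ (c : ℂ) x a, smul (c • x) a = c • smul x a
  smul_csmul : ∀ (c : ℂ) x a, smul x (c • a) = c • smul x a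
  inner_add_left : ∀ x y z, inner (x + y) z = inner x z + inner y z
  inner_add_right : ∀ x y z, inner x (y + z) = inner x y + inner x z
  inner_csmul_right : ∀ (c : ℂ) x y, inner x (c • y) = c • inner x y
  inner_smul_right : ∀ x y a, inner x (smul y a) = inner x y * a
  star_inner : ∀ x y, star (inner x y) = inner y x
  inner_self_nonneg : ∀ x, 0 ≤ inner x x
  inner_self_eq_zero : ∀ x, inner x x = 0 → x = 0
  norm_sq_eq : ∀ x, ‖x‖ ^ 2 = ‖inner x x‖
  norm_inner_le : ∀ x y, ‖inner x y‖ ≤ ‖x‖ * ‖y‖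
  norm_smul_le : ∀ x a, ‖smul x a‖ ≤ ‖x‖ * ‖a‖
  /-- the rank-one operator `Θ_{x,y}` as a bounded operator on `M` -/
  theta : M → M → (M →L[ℂ] M)
  theta_apply : ∀ x y z, theta x y z = smul x (inner y z)

section Aux

variable {A M : Type*} [NonUnitalCStarAlgebra A] [PartialOrder A] [StarOrderedRing A]
  [NormedAddCommGroup M] [NormedSpace ℂ M] (h : HilbertCStarModule A M)

lemma HilbertCStarModule.smul_neg' (x : M) (a : A) : h.smul x (-a) = -(h.smul x a) := by
  have h1 := h.smul_add x a (-a)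
  rw [add_neg_cancel, h.smul_zero] at h1
  exact (neg_eq_of_add_eq_zero_right h1.symm).symm

lemma HilbertCStarModule.smul_sub' (x : M) (a b : A) :
    h.smul x (a - b) = h.smul x a - h.smul x b := by
  rw [sub_eq_add_neg, h.smul_add, h.smul_neg', sub_eq_add_neg]

lemma HilbertCStarModule.neg_smul' (x : M) (a : A) : h.smul (-x) a = -(h.smul x a) := by
  have h1 := h.add_smul x (-x) a
  rw [add_neg_cancel, h.zero_smul] at h1
  exact (neg_eq_of_add_eq_zero_right h1.symm).symm

lemma HilbertCStarModule.sub_smul' (x y : M) (a : A) :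
    h.smul (x - y) a = h.smul x a - h.smul y a := by
  rw [sub_eq_add_neg, h.add_smul, h.neg_smul', sub_eq_add_neg]

lemma HilbertCStarModule.inner_zero_right' (x : M) : h.inner x 0 = 0 := by
  have h1 := h.inner_add_right x 0 0
  rw [add_zero] at h1
  exact (left_eq_add.mp h1)

lemma HilbertCStarModule.inner_sub_right' (x y z : M) :
    h.inner x (y - z) = h.inner x y - h.inner x z := by
  have h1 := h.inner_add_right x (y - z) z
  rw [sub_add_cancel] at h1
  exact eq_sub_of_add_eq h1.symm

lemma HilbertCStarModule.continuous_smul_left' (a : A) :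
    Continuous (fun x : M => h.smul x a) := by
  apply LipschitzWith.continuous (K := ‖a‖₊)
  intro x y
  rw [edist_nndist, edist_nndist, ← ENNReal.coe_mul, ENNReal.coe_le_coe,
    ← NNReal.coe_le_coe]
  push_cast
  rw [dist_eq_norm, dist_eq_norm]
  calc ‖h.smul x a - h.smul y a‖ = ‖h.smul (x - y) a‖ := by rw [h.sub_smul']
    _ ≤ ‖x - y‖ * ‖a‖ := h.norm_smul_le _ _
    _ = ‖a‖ * ‖x - y‖ := mul_comm _ _

lemma HilbertCStarModule.continuous_smul_right' (x : M) :
    Continuous (fun a : A => h.smul x a) := by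
  apply LipschitzWith.continuous (K := ‖x‖₊)
  intro a b
  rw [edist_nndist, edist_nndist, ← ENNReal.coe_mul, ENNReal.coe_le_coe,
    ← NNReal.coe_le_coe]
  push_cast
  rw [dist_eq_norm, dist_eq_norm]
  calc ‖h.smul x a - h.smul x b‖ = ‖h.smul x (a - b)‖ := by rw [h.smul_sub']
    _ ≤ ‖x‖ * ‖a - b‖ := h.norm_smul_le _ _

lemma HilbertCStarModule.continuous_inner_right' (x : M) :
    Continuous (fun y : M => h.inner x y) := by
  apply LipschitzWith.continuous (K := ‖x‖₊)
  intro a b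
  rw [edist_nndist, edist_nndist, ← ENNReal.coe_mul, ENNReal.coe_le_coe,
    ← NNReal.coe_le_coe]
  push_cast
  rw [dist_eq_norm, dist_eq_norm]
  calc ‖h.inner x a - h.inner x b‖ = ‖h.inner x (a - b)‖ := by rw [h.inner_sub_right']
    _ ≤ ‖x‖ * ‖a - b‖ := h.norm_inner_le _ _

end Aux

/-- Let `A` be a commutative C*-algebra. Every topologically
essential closed submodule `N` of a Hilbert `A`-module `M` is essential: for every
nonzero `m ∈ M` there exists `a ∈ A` with `m·a ∈ N` and `m·a ≠ 0`. (Topological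
essentiality is taken in the equivalent sequential form: every nonzero `m` admits a
sequence `a k` with `m·(a k)` converging to a nonzero element of `N`.) -/
theorem essential_of_topologicallyEssential_comm {A M : Type*} [NonUnitalCStarAlgebra A]
    [PartialOrder A] [StarOrderedRing A] [NormedAddCommGroup M] [NormedSpace ℂ M]
    (hcomm : ∀ a b : A, a * b = b * a)
    (h : HilbertCStarModule A M)
    (N : Submodule ℂ M) (hNs : ∀ x ∈ N, ∀ a : A, h.smul x a ∈ N)
    (hNc : IsClosed (N : Set M))
    (hTE : ∀ m : M, m ≠ 0 → ∃ (a : ℕ → A) (n : M), n ∈ N ∧ n ≠ 0 ∧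
      Tendsto (fun k => h.smul m (a k)) atTop (𝓝 n)) :
    ∀ m : M, m ≠ 0 → ∃ a : A, h.smul m a ∈ N ∧ h.smul m a ≠ 0 := by
  intro m hm
  obtain ⟨a, n, hnN, hn0, hk⟩ := hTE m hm
  -- the key sequence: m·(⟨n,m⟩ * a k) = (m·(a k))·⟨n,m⟩
  have hseq : ∀ k, h.smul m (h.inner n (h.smul m (a k)))
      = h.smul (h.smul m (a k)) (h.inner n m) := by
    intro k
    rw [h.inner_smul_right, hcomm, ← h.smul_smul]
  have t1 : Tendsto (fun k => h.smul m (h.inner n (h.smul m (a k)))) atTop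
      (𝓝 (h.smul m (h.inner n n))) := by
    exact (((h.continuous_smul_right' m).comp (h.continuous_inner_right' n)).tendsto n).comp hk
  have t2 : Tendsto (fun k => h.smul (h.smul m (a k)) (h.inner n m)) atTop
      (𝓝 (h.smul n (h.inner n m))) :=
    ((h.continuous_smul_left' (h.inner n m)).tendsto n).comp hk
  have heq : h.smul m (h.inner n n) = h.smul n (h.inner n m) := by
    refine tendsto_nhds_unique t1 ?_
    simpa only [hseq] using t2
  refine ⟨h.inner n n, ?_, ?_⟩
  · rw [heq]; exact hNs n hnN _
  · intro h0
    -- then n·⟨n,n⟩ = 0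
    have hz : ∀ k, h.smul (h.smul m (a k)) (h.inner n n) = 0 := by
      intro k
      rw [h.smul_smul, ← hcomm, ← h.smul_smul, h0, h.zero_smul]
    have t3 : Tendsto (fun k => h.smul (h.smul m (a k)) (h.inner n n)) atTop
        (𝓝 (h.smul n (h.inner n n))) :=
      ((h.continuous_smul_left' (h.inner n n)).tendsto n).comp hk
    have hn2 : h.smul n (h.inner n n) = 0 := by
      refine tendsto_nhds_unique t3 ?_
      rw [funext hz]
      exact tendsto_const_nhds
    have hsq : h.inner n n * h.inner n n = 0 := by
      have := congrArg (h.inner n) hn2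
      rwa [h.inner_smul_right, h.inner_zero_right'] at this
    have hsa : star (h.inner n n) = h.inner n n := h.star_inner n n
    have hnorm : ‖h.inner n n‖ * ‖h.inner n n‖ = 0 := by
      rw [← CStarRing.norm_star_mul_self, hsa, hsq, norm_zero]
    have : h.inner n n = 0 := by
      have := mul_self_eq_zero.mp hnorm
      exact norm_eq_zero.mp this
    exact hn0 (h.inner_self_eq_zero n this)
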